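/- arXiv:2007.10386 — 5 statements merged into one kernel-verified Lean document; each statement's English description precedes it below -/
import Mathlib

section
/- Let |ξ| < π/2, 0 ≤ ρ < 1 and 0 ≤ γ < 1. If f(z) = z + Σ_{n=2}^∞ a_n z^n belongs to 𝒜 and its coefficients satisfy Σ_{n=2}^∞ n [ (1-ρ)(n-1) sec ξ + (1-γ)(1 + nρ - ρ) ] |a_n| ≤ 1 - γ, then f belongs to the class 𝒦(ξ, γ, ρ). -/
noncomputable section

open Complex Real Set

/-- The open unit disk in the complex plane. -/
def unitDisk : Set ℂ := Metric.ball 0 1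

/-- The class 𝒜 of normalized analytic functions on the unit disk:
`f` analytic on `𝔻`, `f 0 = 0`, `f' 0 = 1`. -/
def NormalizedAnalytic (f : ℂ → ℂ) : Prop :=
  AnalyticOn ℂ f unitDisk ∧ f 0 = 0 ∧ deriv f 0 = 1

/-- The spirallike class `𝒮(ξ, γ, ρ)`. -/
def SpiralS (ξ γ ρ : ℝ) (f : ℂ → ℂ) : Prop :=
  NormalizedAnalytic f ∧ Set.InjOn f unitDisk ∧
    ∀ z ∈ unitDisk, z ≠ 0 →
      (1 - (ρ : ℂ)) * f z + (ρ : ℂ) * z * deriv f z ≠ 0 ∧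
      γ * Real.cos ξ <
        (Complex.exp (Complex.I * ξ) * (z * deriv f z) /
          ((1 - (ρ : ℂ)) * f z + (ρ : ℂ) * z * deriv f z)).re

/-- The convex spirallike class `𝒦(ξ, γ, ρ)`. -/
def SpiralK (ξ γ ρ : ℝ) (f : ℂ → ℂ) : Prop :=
  NormalizedAnalytic f ∧ Set.InjOn f unitDisk ∧
    ∀ z ∈ unitDisk,
      deriv f z + (ρ : ℂ) * z * deriv (deriv f) z ≠ 0 ∧
      γ * Real.cos ξ <
        (Complex.exp (Complex.I * ξ) * (z * deriv (deriv f) z + deriv f z) /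
          (deriv f z + (ρ : ℂ) * z * deriv (deriv f) z)).re

/-- The spirallike class `𝒮(ξ, γ)`. -/
def SpiralS0 (ξ γ : ℝ) (f : ℂ → ℂ) : Prop :=
  NormalizedAnalytic f ∧ Set.InjOn f unitDisk ∧
    ∀ z ∈ unitDisk, z ≠ 0 →
      f z ≠ 0 ∧
      γ * Real.cos ξ <
        (Complex.exp (Complex.I * ξ) * (z * deriv f z) / f z).re

/-- The convex spirallike class `𝒦(ξ, γ)`. -/
def SpiralK0 (ξ γ : ℝ) (f : ℂ → ℂ) : Prop :=
  NormalizedAnalytic f ∧ Set.InjOn f unitDisk ∧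
    ∀ z ∈ unitDisk,
      deriv f z ≠ 0 ∧
      γ * Real.cos ξ <
        (Complex.exp (Complex.I * ξ) *
          (1 + z * deriv (deriv f) z / deriv f z)).re

/-- The class `ℛ^τ(ϑ, δ)`. -/
def ClassR (τ : ℂ) (ϑ δ : ℝ) (f : ℂ → ℂ) : Prop :=
  NormalizedAnalytic f ∧ Set.InjOn f unitDisk ∧
    ∀ z ∈ unitDisk,
      ‖(((1 - (ϑ : ℂ)) * (if z = 0 then 1 else f z / z) + (ϑ : ℂ) * deriv f z - 1) /
          (2 * τ * (1 - (δ : ℂ)) +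
            (1 - (ϑ : ℂ)) * (if z = 0 then 1 else f z / z) + (ϑ : ℂ) * deriv f z - 1))‖ < 1

/-- The Pascal distribution series
`Θ_q^m(z) = z + ∑_{n=2}^∞ C(n+m-2, m-1) q^(n-1) (1-q)^m z^n`. -/
def pascalTheta (m : ℕ) (q : ℝ) : ℂ → ℂ := fun z =>
  z + ∑' n : ℕ, ((n + m).choose (m - 1) : ℂ) * (q : ℂ) ^ (n + 1) * (1 - (q : ℂ)) ^ m * z ^ (n + 2)

/-- The integral operator `𝒢_q^m(z) = ∫_0^z Θ_q^m(t)/t dt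
= z + ∑_{n=2}^∞ C(n+m-2, m-1) q^(n-1) (1-q)^m z^n / n`. -/
def pascalG (m : ℕ) (q : ℝ) : ℂ → ℂ := fun z =>
  z + ∑' n : ℕ, ((n + m).choose (m - 1) : ℂ) * (q : ℂ) ^ (n + 1) * (1 - (q : ℂ)) ^ m *
    z ^ (n + 2) / ((n : ℂ) + 2)

/-! Write `f' = 1 + P` and `z f'' = Q`. Multiplied by `cos ξ`, the coefficient condition bounds
`(1 - ρ) ‖Q‖ + K (‖P‖ + ρ ‖Q‖)` by `K ‖z‖`, where `K = (1 - γ) cos ξ`. In particular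
`‖f' - 1‖ ≤ ‖z‖`, so `f - id` is a contraction on every smaller disk and `f` is univalent. Moreover
`(z f'' + f') / (f' + ρ z f'') = 1 + (1 - ρ) Q / (f' + ρ Q)`, and the second term has modulus less
than `K`; after rotation by `e^{iξ}` the real part therefore exceeds `cos ξ - K = γ cos ξ`. -/

open Metric

theorem norm_tsum_mul_pow_succ_le {c : ℕ → ℂ} (hc : Summable fun n => ‖c n‖) {z : ℂ}
    (hz : ‖z‖ ≤ 1) : ‖∑' n, c n * z ^ (n + 1)‖ ≤ ‖z‖ * ∑' n, ‖c n‖ := by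
  refine tsum_of_norm_bounded (hc.hasSum.mul_left ‖z‖) fun n => ?_
  rw [norm_mul, norm_pow, mul_comm]
  gcongr
  exact pow_le_of_le_one (norm_nonneg z) hz n.succ_ne_zero

theorem hasDerivAt_tsum_mul_pow {c : ℕ → ℂ} (k : ℕ)
    (hc : Summable fun n => ((n + k + 1 : ℕ) : ℝ) * ‖c n‖) {z : ℂ} (hz : z ∈ ball (0 : ℂ) 1) :
    HasDerivAt (fun w => ∑' n, c n * w ^ (n + k + 1))
      (∑' n, ((n + k + 1 : ℕ) : ℂ) * c n * z ^ (n + k)) z := by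
  refine hasDerivAt_tsum_of_isPreconnected (g := fun n w => c n * w ^ (n + k + 1))
    (g' := fun n w => ((n + k + 1 : ℕ) : ℂ) * c n * w ^ (n + k)) (y₀ := 0) hc
    isOpen_ball (convex_ball 0 1).isPreconnected (fun n w _ => ?_) (fun n w hw => ?_)
    (mem_ball_self one_pos) (by simp) hz
  · simpa [mul_left_comm, mul_assoc] using (hasDerivAt_pow (n + k + 1) w).const_mul (c n)
  · rw [norm_mul, norm_mul, norm_pow, Complex.norm_natCast]
    exact mul_le_of_le_one_right (by positivity)
      (pow_le_one₀ (norm_nonneg w) (mem_ball_zero_iff.mp hw).le)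

theorem injOn_ball_of_norm_deriv_sub_one_le {𝕜 : Type*} [RCLike 𝕜] {g g' : 𝕜 → 𝕜}
    (hg : ∀ z ∈ ball (0 : 𝕜) 1, HasDerivAt g (g' z) z)
    (hg' : ∀ z ∈ ball (0 : 𝕜) 1, ‖g' z - 1‖ ≤ ‖z‖) : InjOn g (ball 0 1) := by
  intro z₁ hz₁ z₂ hz₂ heq
  rw [mem_ball_zero_iff] at hz₁ hz₂
  set M := max ‖z₁‖ ‖z₂‖
  have hM : M < 1 := max_lt hz₁ hz₂
  have hsub : closedBall (0 : 𝕜) M ⊆ ball 0 1 := closedBall_subset_ball hM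
  have hlip : ‖(g z₂ - z₂) - (g z₁ - z₁)‖ ≤ M * ‖z₂ - z₁‖ :=
    (convex_closedBall 0 M).norm_image_sub_le_of_norm_hasDerivWithin_le (f := fun w => g w - w)
      (fun w hw => ((hg w (hsub hw)).sub (hasDerivAt_id w)).hasDerivWithinAt)
      (fun w hw => (hg' w (hsub hw)).trans (mem_closedBall_zero_iff.mp hw))
      (mem_closedBall_zero_iff.mpr (le_max_left _ _))
      (mem_closedBall_zero_iff.mpr (le_max_right _ _))
  rw [heq, sub_sub_sub_cancel_left, norm_sub_rev] at hlip
  have : ‖z₂ - z₁‖ = 0 := by nlinarith [norm_nonneg (z₂ - z₁)]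
  exact (sub_eq_zero.mp (norm_eq_zero.mp this)).symm

theorem exp_mul_div_re_gt {u w : ℂ} {ρ K : ℝ} (ξ : ℝ) (hρ0 : 0 ≤ ρ) (hρ1 : ρ ≤ 1) (hK : 0 ≤ K)
    (h : (1 - ρ) * ‖w‖ + K * (‖u - 1‖ + ρ * ‖w‖) < K) :
    u + ρ * w ≠ 0 ∧ Real.cos ξ - K < (exp (I * ξ) * (w + u) / (u + ρ * w)).re := by
  set v := u + ρ * w
  have hv : 1 - (‖u - 1‖ + ρ * ‖w‖) ≤ ‖v‖ := by
    have h₁ : ‖(u - 1) + ρ * w‖ ≤ ‖u - 1‖ + ρ * ‖w‖ := by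
      simpa [norm_mul, abs_of_nonneg hρ0] using norm_add_le (u - 1) (ρ * w)
    have h₂ := norm_sub_le v ((u - 1) + ρ * w)
    rw [show v - ((u - 1) + ρ * w) = 1 by ring, norm_one] at h₂
    linarith
  -- `(1 - ρ) ‖w‖ < K (1 - ‖u - 1‖ - ρ ‖w‖) ≤ K ‖v‖`
  have hsmall : (1 - ρ) * ‖w‖ < K * ‖v‖ := by nlinarith
  have hv0 : 0 < ‖v‖ := by nlinarith [norm_nonneg w]
  have hv_ne : v ≠ 0 := norm_pos_iff.mp hv0
  refine ⟨hv_ne, ?_⟩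
  have hsplit : exp (I * ξ) * (w + u) / v = exp (ξ * I) + exp (ξ * I) * ((1 - ρ) * w / v) := by
    field_simp
    ring
  have hnorm : ‖exp (ξ * I) * ((1 - ρ) * w / v)‖ < K := by
    rw [norm_mul, norm_exp_ofReal_mul_I, one_mul, norm_div, norm_mul, div_lt_iff₀ hv0,
      show (1 : ℂ) - ρ = ((1 - ρ : ℝ) : ℂ) by push_cast; ring, norm_real,
      norm_of_nonneg (by linarith)]
    exact hsmall
  rw [hsplit, add_re, exp_ofReal_mul_I_re]
  linarith [(abs_lt.mp ((abs_re_le_norm _).trans_lt hnorm)).1]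

theorem summable_and_tsum_le_of_weighted_tsum_le {ξ ρ γ : ℝ} {b : ℕ → ℝ} (hcos : 0 < Real.cos ξ)
    (hρ0 : 0 ≤ ρ) (hρ1 : ρ < 1) (hγ1 : γ < 1) (hb : ∀ n, 0 ≤ b n)
    (hsum : Summable fun n : ℕ => ((n : ℝ) + 2) * ((1 - ρ) * ((n : ℝ) + 1) * (Real.cos ξ)⁻¹ +
      (1 - γ) * (1 + ((n : ℝ) + 2) * ρ - ρ)) * b n)
    (hle : ∑' n : ℕ, ((n : ℝ) + 2) * ((1 - ρ) * ((n : ℝ) + 1) * (Real.cos ξ)⁻¹ +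
      (1 - γ) * (1 + ((n : ℝ) + 2) * ρ - ρ)) * b n ≤ 1 - γ) :
    Summable (fun n : ℕ => ((n : ℝ) + 2) * b n) ∧
      Summable (fun n : ℕ => ((n : ℝ) + 2) * ((n : ℝ) + 1) * b n) ∧
      (1 - ρ) * ∑' n : ℕ, ((n : ℝ) + 2) * ((n : ℝ) + 1) * b n +
        (1 - γ) * Real.cos ξ * (∑' n : ℕ, ((n : ℝ) + 2) * b n +
          ρ * ∑' n : ℕ, ((n : ℝ) + 2) * ((n : ℝ) + 1) * b n) ≤ (1 - γ) * Real.cos ξ := by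
  set K := (1 - γ) * Real.cos ξ
  have hK : 0 < K := mul_pos (by linarith) hcos
  set d₁ : ℕ → ℝ := fun n => ((n : ℝ) + 2) * b n
  set d₂ : ℕ → ℝ := fun n => ((n : ℝ) + 2) * ((n : ℝ) + 1) * b n
  have hd₁ : ∀ n, 0 ≤ d₁ n := fun n => mul_nonneg (by positivity) (hb n)
  have hd₂ : ∀ n, 0 ≤ d₂ n := fun n => mul_nonneg (by positivity) (hb n)
  have hweight : ∀ n : ℕ, Real.cos ξ * (((n : ℝ) + 2) * ((1 - ρ) * ((n : ℝ) + 1) * (Real.cos ξ)⁻¹ +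
      (1 - γ) * (1 + ((n : ℝ) + 2) * ρ - ρ)) * b n) = (1 - ρ) * d₂ n + K * (d₁ n + ρ * d₂ n) := by
    intro n
    field_simp
    ring
  have hsum' := hsum.mul_left (Real.cos ξ)
  simp only [hweight] at hsum'
  have hs₁ : Summable d₁ := (summable_mul_left_iff hK.ne').mp <|
    hsum'.of_nonneg_of_le (fun n => mul_nonneg hK.le (hd₁ n)) fun n => by
      nlinarith [hd₂ n, mul_nonneg hK.le (mul_nonneg hρ0 (hd₂ n))]
  have hs₂ : Summable d₂ := (summable_mul_left_iff (by linarith : 1 - ρ ≠ 0)).mp <|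
    hsum'.of_nonneg_of_le (fun n => mul_nonneg (by linarith) (hd₂ n)) fun n => by
      nlinarith [hd₁ n, hd₂ n, mul_nonneg hK.le (mul_nonneg hρ0 (hd₂ n))]
  refine ⟨hs₁, hs₂, ?_⟩
  have hcomb := (hs₂.hasSum.mul_left (1 - ρ)).add
    ((hs₁.hasSum.add (hs₂.hasSum.mul_left ρ)).mul_left K)
  rw [hcomb.unique (by simpa only [hweight] using hsum.hasSum.mul_left (Real.cos ξ))]
  exact mul_le_mul_of_nonneg_left hle hcos.le |>.trans_eq (mul_comm _ _)

section PowerSeries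

variable {f : ℂ → ℂ} {a : ℕ → ℂ}
  (hrep : ∀ z ∈ unitDisk, HasSum (fun n : ℕ => a (n + 2) * z ^ (n + 2)) (f z - z))
include hrep

theorem apply_zero_eq_zero_of_hasSum : f 0 = 0 := by
  have h0 : HasSum (fun n : ℕ => a (n + 2) * (0 : ℂ) ^ (n + 2)) 0 := by simp
  simpa using (hrep 0 (mem_ball_self one_pos)).unique h0

theorem hasDerivAt_of_hasSum (ha : Summable fun n : ℕ => ((n : ℝ) + 2) * ‖a (n + 2)‖) {z : ℂ}
    (hz : z ∈ unitDisk) :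
    HasDerivAt f (1 + ∑' n : ℕ, ((n : ℂ) + 2) * a (n + 2) * z ^ (n + 1)) z := by
  have hser := hasDerivAt_tsum_mul_pow (c := fun n => a (n + 2)) 1
    (by convert ha using 2; push_cast; ring) hz
  refine (((hasDerivAt_id z).add hser).congr_deriv ?_).congr_of_eventuallyEq ?_
  · congr 1
    exact tsum_congr fun n => by push_cast; ring
  · filter_upwards [isOpen_ball.mem_nhds hz] with w hw
    show f w = w + ∑' n : ℕ, a (n + 2) * w ^ (n + 2)
    rw [(hrep w hw).tsum_eq]
    ring

theorem hasDerivAt_deriv_of_hasSum (ha : Summable fun n : ℕ => ((n : ℝ) + 2) * ‖a (n + 2)‖)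
    (ha' : Summable fun n : ℕ => ((n : ℝ) + 2) * ((n : ℝ) + 1) * ‖a (n + 2)‖) {z : ℂ}
    (hz : z ∈ unitDisk) :
    HasDerivAt (deriv f) (∑' n : ℕ, ((n : ℂ) + 2) * ((n : ℂ) + 1) * a (n + 2) * z ^ n) z := by
  have hser := hasDerivAt_tsum_mul_pow (c := fun n => ((n : ℂ) + 2) * a (n + 2)) 0
    (by convert ha' using 2; rw [norm_mul]; norm_cast; push_cast; ring) hz
  refine (((hasDerivAt_const z 1).add hser).congr_deriv ?_).congr_of_eventuallyEq ?_
  · rw [zero_add]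
    exact tsum_congr fun n => by push_cast; ring
  · filter_upwards [isOpen_ball.mem_nhds hz] with w hw
    rw [(hasDerivAt_of_hasSum hrep ha hw).deriv]
    rfl

theorem weighted_norm_deriv_le (ha : Summable fun n : ℕ => ((n : ℝ) + 2) * ‖a (n + 2)‖)
    (ha' : Summable fun n : ℕ => ((n : ℝ) + 2) * ((n : ℝ) + 1) * ‖a (n + 2)‖) {ρ K : ℝ}
    (hρ0 : 0 ≤ ρ) (hρ1 : ρ ≤ 1) (hK : 0 ≤ K)
    (hcoef : (1 - ρ) * ∑' n : ℕ, ((n : ℝ) + 2) * ((n : ℝ) + 1) * ‖a (n + 2)‖ +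
      K * (∑' n : ℕ, ((n : ℝ) + 2) * ‖a (n + 2)‖ +
        ρ * ∑' n : ℕ, ((n : ℝ) + 2) * ((n : ℝ) + 1) * ‖a (n + 2)‖) ≤ K)
    {z : ℂ} (hz : z ∈ unitDisk) :
    (1 - ρ) * ‖z * deriv (deriv f) z‖ + K * (‖deriv f z - 1‖ + ρ * ‖z * deriv (deriv f) z‖) ≤
      ‖z‖ * K := by
  set S₁ := ∑' n : ℕ, ((n : ℝ) + 2) * ‖a (n + 2)‖
  set S₂ := ∑' n : ℕ, ((n : ℝ) + 2) * ((n : ℝ) + 1) * ‖a (n + 2)‖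
  have hz1 : ‖z‖ ≤ 1 := (mem_ball_zero_iff.mp hz).le
  have hn₁ : ∀ n : ℕ, ‖((n : ℂ) + 2) * a (n + 2)‖ = ((n : ℝ) + 2) * ‖a (n + 2)‖ := fun n => by
    rw [norm_mul]; norm_cast
  have hn₂ : ∀ n : ℕ, ‖((n : ℂ) + 2) * ((n : ℂ) + 1) * a (n + 2)‖ =
      ((n : ℝ) + 2) * ((n : ℝ) + 1) * ‖a (n + 2)‖ := fun n => by
    rw [norm_mul, norm_mul]; norm_cast
  have h₁ : ‖deriv f z - 1‖ ≤ ‖z‖ * S₁ := by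
    rw [(hasDerivAt_of_hasSum hrep ha hz).deriv, add_sub_cancel_left]
    simpa only [hn₁] using norm_tsum_mul_pow_succ_le (c := fun n => ((n : ℂ) + 2) * a (n + 2))
      (by simpa only [hn₁] using ha) hz1
  have h₂ : ‖z * deriv (deriv f) z‖ ≤ ‖z‖ * S₂ := by
    rw [(hasDerivAt_deriv_of_hasSum hrep ha ha' hz).deriv, ← tsum_mul_left]
    have := norm_tsum_mul_pow_succ_le
      (c := fun n => ((n : ℂ) + 2) * ((n : ℂ) + 1) * a (n + 2)) (by simpa only [hn₂] using ha') hz1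
    simp only [hn₂] at this
    convert this using 2
    exact tsum_congr fun n => by ring
  have h1ρ : 0 ≤ 1 - ρ := by linarith
  calc (1 - ρ) * ‖z * deriv (deriv f) z‖ + K * (‖deriv f z - 1‖ + ρ * ‖z * deriv (deriv f) z‖)
      ≤ (1 - ρ) * (‖z‖ * S₂) + K * (‖z‖ * S₁ + ρ * (‖z‖ * S₂)) := by gcongr
    _ = ‖z‖ * ((1 - ρ) * S₂ + K * (S₁ + ρ * S₂)) := by ring
    _ ≤ ‖z‖ * K := by gcongr

end PowerSeries

theorem stmt1_general (ξ ρ γ : ℝ) (hξ : |ξ| < π / 2) (hρ0 : 0 ≤ ρ) (hρ1 : ρ < 1)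
    (hγ1 : γ < 1) (f : ℂ → ℂ) (a : ℕ → ℂ)
    (hrep : ∀ z ∈ unitDisk, HasSum (fun n : ℕ => a (n + 2) * z ^ (n + 2)) (f z - z))
    (hsummable : Summable (fun n : ℕ =>
      ((n : ℝ) + 2) * ((1 - ρ) * ((n : ℝ) + 1) * (Real.cos ξ)⁻¹ +
        (1 - γ) * (1 + ((n : ℝ) + 2) * ρ - ρ)) * ‖a (n + 2)‖))
    (hle : ∑' n : ℕ,
      ((n : ℝ) + 2) * ((1 - ρ) * ((n : ℝ) + 1) * (Real.cos ξ)⁻¹ +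
        (1 - γ) * (1 + ((n : ℝ) + 2) * ρ - ρ)) * ‖a (n + 2)‖ ≤ 1 - γ) :
    SpiralK ξ γ ρ f := by
  have hcos : 0 < Real.cos ξ :=
    cos_pos_of_mem_Ioo ⟨by linarith [neg_abs_le ξ], by linarith [le_abs_self ξ]⟩
  have hK : 0 < (1 - γ) * Real.cos ξ := mul_pos (by linarith) hcos
  obtain ⟨ha₁, ha₂, hcoef⟩ := summable_and_tsum_le_of_weighted_tsum_le hcos hρ0 hρ1 hγ1
    (fun n => norm_nonneg (a (n + 2))) hsummable hle
  have hf' := fun z (hz : z ∈ unitDisk) => hasDerivAt_of_hasSum hrep ha₁ hz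
  have hest := fun z (hz : z ∈ unitDisk) =>
    weighted_norm_deriv_le hrep ha₁ ha₂ hρ0 hρ1.le hK.le hcoef hz
  refine ⟨⟨?_, apply_zero_eq_zero_of_hasSum hrep, ?_⟩, ?_, fun z hz => ?_⟩
  · exact (DifferentiableOn.analyticOnNhd
      (fun z hz => (hf' z hz).differentiableAt.differentiableWithinAt) isOpen_ball).analyticOn
  · simpa using (hf' 0 (mem_ball_self one_pos)).deriv
  · refine injOn_ball_of_norm_deriv_sub_one_le
      (fun z hz => (hf' z hz).differentiableAt.hasDerivAt) fun z hz => ?_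
    refine le_of_mul_le_mul_left ?_ hK
    have hQ := norm_nonneg (z * deriv (deriv f) z)
    nlinarith [hest z hz, mul_nonneg (sub_nonneg.mpr hρ1.le) hQ,
      mul_nonneg hK.le (mul_nonneg hρ0 hQ)]
  · have hlt := (hest z hz).trans_lt (mul_lt_of_lt_one_left hK (mem_ball_zero_iff.mp hz))
    rw [mul_assoc (ρ : ℂ) z]
    convert exp_mul_div_re_gt ξ hρ0 hρ1.le hK.le hlt using 2
    ring

/-- sufficient coefficient condition for membership in `𝒦(ξ, γ, ρ)`. -/
theorem stmt1 (ξ ρ γ : ℝ) (hξ : |ξ| < π / 2) (hρ0 : 0 ≤ ρ) (hρ1 : ρ < 1)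
    (hγ0 : 0 ≤ γ) (hγ1 : γ < 1) (f : ℂ → ℂ) (a : ℕ → ℂ)
    (hf : AnalyticOn ℂ f unitDisk)
    (hrep : ∀ z ∈ unitDisk, HasSum (fun n : ℕ => a (n + 2) * z ^ (n + 2)) (f z - z))
    (hsummable : Summable (fun n : ℕ =>
      ((n : ℝ) + 2) * ((1 - ρ) * ((n : ℝ) + 1) * (Real.cos ξ)⁻¹ +
        (1 - γ) * (1 + ((n : ℝ) + 2) * ρ - ρ)) * ‖a (n + 2)‖))
    (hle : ∑' n : ℕ,
      ((n : ℝ) + 2) * ((1 - ρ) * ((n : ℝ) + 1) * (Real.cos ξ)⁻¹ +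
        (1 - γ) * (1 + ((n : ℝ) + 2) * ρ - ρ)) * ‖a (n + 2)‖ ≤ 1 - γ) :
    SpiralK ξ γ ρ f :=
  stmt1_general ξ ρ γ hξ hρ0 hρ1 hγ1 f a hrep hsummable hle
end
end

section
/- Let |ξ| < π/2 and 0 ≤ γ < 1. If f(z) = z + Σ_{n=2}^∞ a_n z^n belongs to 𝒜 and its coefficients satisfy Σ_{n=2}^∞ [ (n-1) sec ξ + (1-γ) ] |a_n| ≤ 1 - γ, then f belongs to the class 𝒮(ξ, γ). -/
noncomputable section

open Complex Real Set

/-!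
Write `f z = z + g z` with `g z = ∑ a (n+2) z^(n+2)`, and let `S₁ = ∑ |a (n+2)|`,
`S₂ = ∑ (n+1) |a (n+2)|`, `K = (1 - γ) cos ξ ∈ (0, 1]`. The coefficient condition says exactly
`S₂ ≤ K (1 - S₁)`, so `S₁ + S₂ ≤ 1`. Then `|g' z| ≤ (S₁ + S₂) |z| ≤ |z|`, so `f - id` is a
contraction on every disk `|z| ≤ ρ < 1` and `f` is injective. Moreover
`|z f' z - f z| ≤ S₂ |z|² < K |z| (1 - S₁ |z|) ≤ K |f z|`, so `w = z f' z / f z` satisfies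
`|w - 1| < K`, whence `Re (e^{iξ} w) > cos ξ - K = γ cos ξ`.
-/

section CoefficientBounds

variable {b : ℕ → ℝ} {K : ℝ} (hb : ∀ n, 0 ≤ b n)
  (h2 : Summable fun n : ℕ => ((n : ℝ) + 2) * b n)
include hb h2

lemma summable_of_summable_add_two_mul : Summable b :=
  h2.of_nonneg_of_le hb fun n =>
    le_mul_of_one_le_left (hb n) (by linarith [n.cast_nonneg (α := ℝ)])

lemma summable_succ_mul_of_summable_add_two_mul : Summable fun n : ℕ => ((n : ℝ) + 1) * b n :=
  h2.of_nonneg_of_le (fun n => mul_nonneg (by positivity) (hb n))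
    fun n => mul_le_mul_of_nonneg_right (by linarith) (hb n)

lemma tsum_le_tsum_succ_mul : ∑' n, b n ≤ ∑' n : ℕ, ((n : ℝ) + 1) * b n :=
  (summable_of_summable_add_two_mul hb h2).tsum_le_tsum
    (fun n => le_mul_of_one_le_left (hb n) (by linarith [n.cast_nonneg (α := ℝ)]))
    (summable_succ_mul_of_summable_add_two_mul hb h2)

variable (hK : 0 ≤ K) (hcoef : ∑' n : ℕ, ((n : ℝ) + 1) * b n ≤ K * (1 - ∑' n, b n))
include hK hcoef

lemma tsum_lt_one_of_tsum_succ_mul_le : ∑' n, b n < 1 := by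
  have := tsum_le_tsum_succ_mul hb h2
  nlinarith

lemma tsum_add_two_mul_le_one_of_tsum_succ_mul_le (hK1 : K ≤ 1) :
    ∑' n : ℕ, ((n : ℝ) + 2) * b n ≤ 1 := by
  have hS1 := tsum_lt_one_of_tsum_succ_mul_le hb h2 hK hcoef
  have hsplit :
      ∑' n : ℕ, ((n : ℝ) + 2) * b n = ∑' n : ℕ, ((n : ℝ) + 1) * b n + ∑' n, b n := by
    rw [← (summable_succ_mul_of_summable_add_two_mul hb h2).tsum_add
      (summable_of_summable_add_two_mul hb h2)]
    exact tsum_congr fun n => by ring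
  nlinarith

end CoefficientBounds

lemma summable_and_tsum_succ_mul_le_of_weighted_tsum_le {b : ℕ → ℝ} {s δ : ℝ}
    (hb : ∀ n, 0 ≤ b n) (hs : 1 ≤ s) (hδ : 0 ≤ δ)
    (hsum : Summable fun n : ℕ => (((n : ℝ) + 1) * s + δ) * b n)
    (hle : ∑' n : ℕ, (((n : ℝ) + 1) * s + δ) * b n ≤ δ) :
    (Summable fun n : ℕ => ((n : ℝ) + 2) * b n) ∧
      ∑' n : ℕ, ((n : ℝ) + 1) * b n ≤ δ / s * (1 - ∑' n, b n) := by
  have h2 : Summable fun n : ℕ => ((n : ℝ) + 2) * b n :=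
    (hsum.mul_left 2).of_nonneg_of_le (fun n => mul_nonneg (by positivity) (hb n)) fun n => by
      have : (n : ℝ) + 2 ≤ 2 * (((n : ℝ) + 1) * s + δ) := by nlinarith [n.cast_nonneg (α := ℝ)]
      nlinarith [hb n]
  refine ⟨h2, ?_⟩
  have hsplit : s * ∑' n : ℕ, ((n : ℝ) + 1) * b n + δ * ∑' n, b n
      = ∑' n : ℕ, (((n : ℝ) + 1) * s + δ) * b n := by
    rw [← tsum_mul_left, ← tsum_mul_left,
      ← ((summable_succ_mul_of_summable_add_two_mul hb h2).mul_left s).tsum_add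
        ((summable_of_summable_add_two_mul hb h2).mul_left δ)]
    exact tsum_congr fun n => by ring
  rw [div_mul_eq_mul_div, le_div_iff₀ (by linarith)]
  linarith

lemma cos_sub_norm_sub_one_le_re_exp_mul (ξ : ℝ) (w : ℂ) :
    Real.cos ξ - ‖w - 1‖ ≤ (exp (I * ξ) * w).re := by
  have hsplit : exp (I * ξ) * w = exp (I * ξ) + exp (I * ξ) * (w - 1) := by ring
  have hre : (exp (I * ξ)).re = Real.cos ξ := by rw [mul_comm]; exact exp_ofReal_mul_I_re ξ
  have hnorm : ‖exp (I * ξ) * (w - 1)‖ = ‖w - 1‖ := by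
    rw [norm_mul, mul_comm I, norm_exp_ofReal_mul_I, one_mul]
  have := neg_le_of_abs_le ((abs_re_le_norm _).trans hnorm.le)
  rw [hsplit, add_re, hre]
  linarith

def tailSeries (c : ℕ → ℂ) (z : ℂ) : ℂ := ∑' n, c n * z ^ (n + 2)

section TailSeries

variable {c : ℕ → ℂ} {f : ℂ → ℂ} {z : ℂ}

lemma norm_mul_pow_add_le (x : ℂ) (hz : ‖z‖ ≤ 1) (n k : ℕ) :
    ‖x * z ^ (n + k)‖ ≤ ‖x‖ * ‖z‖ ^ k := by
  rw [norm_mul, norm_pow, pow_add]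
  gcongr
  exact mul_le_of_le_one_left (by positivity) (pow_le_one₀ (norm_nonneg z) hz)

lemma summable_mul_pow_add (hc : Summable fun n => ‖c n‖) (hz : ‖z‖ ≤ 1) (k : ℕ) :
    Summable fun n => c n * z ^ (n + k) :=
  .of_norm_bounded (hc.mul_right (‖z‖ ^ k)) fun n => norm_mul_pow_add_le (c n) hz n k

lemma norm_tsum_mul_pow_add_le (hc : Summable fun n => ‖c n‖) (hz : ‖z‖ ≤ 1) (k : ℕ) :
    ‖∑' n, c n * z ^ (n + k)‖ ≤ (∑' n, ‖c n‖) * ‖z‖ ^ k :=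
  tsum_of_norm_bounded (hc.hasSum.mul_right _) fun n => norm_mul_pow_add_le (c n) hz n k

lemma norm_natCast_add_mul (n m : ℕ) (x : ℂ) : ‖((n : ℂ) + m) * x‖ = ((n : ℝ) + m) * ‖x‖ := by
  rw [norm_mul, ← Nat.cast_add, Complex.norm_natCast]
  push_cast
  rfl

variable (hs : Summable fun n : ℕ => ((n : ℝ) + 2) * ‖c n‖)
include hs

lemma hasDerivAt_tailSeries (hz : z ∈ unitDisk) :
    HasDerivAt (tailSeries c) (∑' n : ℕ, ((n : ℂ) + 2) * c n * z ^ (n + 1)) z := by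
  refine hasDerivAt_tsum_of_isPreconnected (g := fun n w => c n * w ^ (n + 2))
    (g' := fun n w => ((n : ℂ) + 2) * c n * w ^ (n + 1)) hs Metric.isOpen_ball
    (convex_ball 0 1).isPreconnected (fun n y _ => ?_) (fun n y hy => ?_)
    (Metric.mem_ball_self one_pos) (by simp) hz
  · refine ((hasDerivAt_pow (n + 2) y).const_mul (c n)).congr_deriv ?_
    rw [show n + 2 - 1 = n + 1 by omega]
    push_cast
    ring
  · have hy : ‖y‖ ≤ 1 := (mem_ball_zero_iff.mp hy).le
    calc ‖((n : ℂ) + 2) * c n * y ^ (n + 1)‖ ≤ ‖((n : ℂ) + 2) * c n‖ := by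
          simpa using norm_mul_pow_add_le (((n : ℂ) + 2) * c n) hy (n + 1) 0
      _ = ((n : ℝ) + 2) * ‖c n‖ := by exact_mod_cast norm_natCast_add_mul n 2 (c n)

lemma norm_deriv_tailSeries_le (h1 : ∑' n : ℕ, ((n : ℝ) + 2) * ‖c n‖ ≤ 1)
    (hz : z ∈ unitDisk) :
    ‖deriv (tailSeries c) z‖ ≤ ‖z‖ := by
  have hz1 : ‖z‖ ≤ 1 := (mem_ball_zero_iff.mp hz).le
  have hnorm :
      (fun n : ℕ => ‖((n : ℂ) + 2) * c n‖) = fun n : ℕ => ((n : ℝ) + 2) * ‖c n‖ := by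
    ext n; exact_mod_cast norm_natCast_add_mul n 2 (c n)
  rw [(hasDerivAt_tailSeries hs hz).deriv]
  calc ‖∑' n : ℕ, ((n : ℂ) + 2) * c n * z ^ (n + 1)‖
      ≤ (∑' n : ℕ, ‖((n : ℂ) + 2) * c n‖) * ‖z‖ ^ 1 :=
        norm_tsum_mul_pow_add_le (hnorm ▸ hs) hz1 1
    _ ≤ ‖z‖ := by rw [hnorm, pow_one]; exact mul_le_of_le_one_left (norm_nonneg z) h1

variable (hfc : EqOn f (fun z => z + tailSeries c z) unitDisk)
include hfc

lemma hasDerivAt_of_eqOn_add_tailSeries (hz : z ∈ unitDisk) :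
    HasDerivAt f (1 + ∑' n : ℕ, ((n : ℂ) + 2) * c n * z ^ (n + 1)) z :=
  ((hasDerivAt_id z).add (hasDerivAt_tailSeries hs hz)).congr_of_eventuallyEq
    (hfc.eventuallyEq_of_mem (Metric.isOpen_ball.mem_nhds hz))

lemma injOn_of_eqOn_add_tailSeries (h1 : ∑' n : ℕ, ((n : ℝ) + 2) * ‖c n‖ ≤ 1) :
    InjOn f unitDisk := by
  intro z₁ hz₁ z₂ hz₂ heq
  set ρ := max ‖z₁‖ ‖z₂‖
  have hρ : ρ < 1 := max_lt (mem_ball_zero_iff.mp hz₁) (mem_ball_zero_iff.mp hz₂)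
  have hball : Metric.closedBall (0 : ℂ) ρ ⊆ unitDisk := Metric.closedBall_subset_ball hρ
  have hlip : ‖tailSeries c z₂ - tailSeries c z₁‖ ≤ ρ * ‖z₂ - z₁‖ :=
    (convex_closedBall 0 ρ).norm_image_sub_le_of_norm_deriv_le
      (fun y hy => (hasDerivAt_tailSeries hs (hball hy)).differentiableAt)
      (fun y hy => (norm_deriv_tailSeries_le hs h1 (hball hy)).trans
        (mem_closedBall_zero_iff.mp hy))
      (mem_closedBall_zero_iff.mpr (le_max_left _ _))
      (mem_closedBall_zero_iff.mpr (le_max_right _ _))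
  have hdiff : tailSeries c z₂ - tailSeries c z₁ = -(z₂ - z₁) := by
    have : z₁ + tailSeries c z₁ = z₂ + tailSeries c z₂ :=
      (hfc hz₁).symm.trans (heq.trans (hfc hz₂))
    linear_combination -this
  rw [hdiff, norm_neg] at hlip
  have : ‖z₂ - z₁‖ = 0 := by nlinarith [norm_nonneg (z₂ - z₁)]
  exact (sub_eq_zero.mp (norm_eq_zero.mp this)).symm

lemma norm_sub_self_le (hz : z ∈ unitDisk) : ‖f z - z‖ ≤ (∑' n : ℕ, ‖c n‖) * ‖z‖ ^ 2 := by
  rw [hfc hz, add_sub_cancel_left]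
  exact norm_tsum_mul_pow_add_le (summable_of_summable_add_two_mul (fun n => norm_nonneg _) hs)
    (mem_ball_zero_iff.mp hz).le 2

lemma mul_deriv_sub_eq_tsum (hz : z ∈ unitDisk) :
    z * deriv f z - f z = ∑' n : ℕ, ((n : ℂ) + 1) * c n * z ^ (n + 2) := by
  have hz1 : ‖z‖ ≤ 1 := (mem_ball_zero_iff.mp hz).le
  have hc := summable_of_summable_add_two_mul (fun n => norm_nonneg _) hs
  have hweighted : Summable fun n : ℕ => ‖((n : ℂ) + 2) * c n‖ :=
    hs.congr fun n => by exact_mod_cast (norm_natCast_add_mul n 2 (c n)).symm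
  have hf : f z = z + tailSeries c z := hfc hz
  rw [(hasDerivAt_of_eqOn_add_tailSeries hs hfc hz).deriv, hf, tailSeries, mul_add, mul_one,
    add_sub_add_left_eq_sub, ← tsum_mul_left]
  have hshift (n : ℕ) :
      z * (((n : ℂ) + 2) * c n * z ^ (n + 1)) = ((n : ℂ) + 2) * c n * z ^ (n + 2) := by ring
  rw [tsum_congr hshift,
    ← (summable_mul_pow_add hweighted hz1 2).tsum_sub (summable_mul_pow_add hc hz1 2)]
  exact tsum_congr fun n => by ring

lemma norm_mul_deriv_sub_le (hz : z ∈ unitDisk) :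
    ‖z * deriv f z - f z‖ ≤ (∑' n : ℕ, ((n : ℝ) + 1) * ‖c n‖) * ‖z‖ ^ 2 := by
  have hnorm :
      (fun n : ℕ => ‖((n : ℂ) + 1) * c n‖) = fun n : ℕ => ((n : ℝ) + 1) * ‖c n‖ := by
    ext n; exact_mod_cast norm_natCast_add_mul n 1 (c n)
  have hsum := summable_succ_mul_of_summable_add_two_mul (fun n => norm_nonneg (c n)) hs
  rw [mul_deriv_sub_eq_tsum hs hfc hz, ← hnorm]
  exact norm_tsum_mul_pow_add_le (hnorm ▸ hsum) (mem_ball_zero_iff.mp hz).le 2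

lemma norm_mul_deriv_div_sub_one_lt {K : ℝ} (hK : 0 < K)
    (hcoef : ∑' n : ℕ, ((n : ℝ) + 1) * ‖c n‖ ≤ K * (1 - ∑' n, ‖c n‖))
    (hz : z ∈ unitDisk) (hz0 : z ≠ 0) :
    f z ≠ 0 ∧ ‖z * deriv f z / f z - 1‖ < K := by
  have hr0 : 0 < ‖z‖ := norm_pos_iff.mpr hz0
  have hr1 : ‖z‖ < 1 := mem_ball_zero_iff.mp hz
  have hS1 := tsum_lt_one_of_tsum_succ_mul_le (fun n => norm_nonneg (c n)) hs hK.le hcoef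
  have hS1' : 0 ≤ ∑' n, ‖c n‖ := tsum_nonneg fun n => norm_nonneg (c n)
  have hfz : ‖z‖ * (1 - (∑' n, ‖c n‖) * ‖z‖) ≤ ‖f z‖ := by
    have := norm_sub_self_le hs hfc hz
    have := norm_sub_norm_le z (f z)
    rw [norm_sub_rev] at this
    nlinarith
  have hpos : 0 < ‖z‖ * (1 - (∑' n, ‖c n‖) * ‖z‖) := mul_pos hr0 (by nlinarith)
  have hfz0 : f z ≠ 0 := norm_pos_iff.mp (hpos.trans_le hfz)
  have hlt : ‖z * deriv f z - f z‖ < K * ‖f z‖ :=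
    calc ‖z * deriv f z - f z‖ ≤ (∑' n : ℕ, ((n : ℝ) + 1) * ‖c n‖) * ‖z‖ ^ 2 :=
          norm_mul_deriv_sub_le hs hfc hz
      _ ≤ K * (1 - ∑' n, ‖c n‖) * ‖z‖ ^ 2 := by gcongr
      _ < K * (‖z‖ * (1 - (∑' n, ‖c n‖) * ‖z‖)) := by
          nlinarith [mul_pos (mul_pos hK hr0) (sub_pos.mpr hr1)]
      _ ≤ K * ‖f z‖ := by gcongr
  refine ⟨hfz0, ?_⟩
  rw [div_sub_one hfz0, norm_div, div_lt_iff₀ (norm_pos_iff.mpr hfz0)]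
  exact hlt

end TailSeries

/-- sufficient coefficient condition for membership in `𝒮(ξ, γ)`. -/
theorem stmt2 (ξ γ : ℝ) (hξ : |ξ| < π / 2) (hγ0 : 0 ≤ γ) (hγ1 : γ < 1)
    (f : ℂ → ℂ) (a : ℕ → ℂ)
    (hf : AnalyticOn ℂ f unitDisk)
    (hrep : ∀ z ∈ unitDisk, HasSum (fun n : ℕ => a (n + 2) * z ^ (n + 2)) (f z - z))
    (hsummable : Summable (fun n : ℕ =>
      (((n : ℝ) + 1) * (Real.cos ξ)⁻¹ + (1 - γ)) * ‖a (n + 2)‖))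
    (hle : ∑' n : ℕ,
      (((n : ℝ) + 1) * (Real.cos ξ)⁻¹ + (1 - γ)) * ‖a (n + 2)‖ ≤ 1 - γ) :
    SpiralS0 ξ γ f := by
  have hcos : 0 < Real.cos ξ := cos_pos_of_mem_Ioo (abs_lt.mp hξ)
  obtain ⟨hs, hcoef⟩ := summable_and_tsum_succ_mul_le_of_weighted_tsum_le (fun n => norm_nonneg _)
    (one_le_inv₀ hcos |>.mpr (cos_le_one ξ)) (by linarith) hsummable hle
  rw [div_inv_eq_mul] at hcoef
  have hK : 0 < (1 - γ) * Real.cos ξ := mul_pos (by linarith) hcos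
  have hfc : EqOn f (fun z => z + tailSeries (fun n => a (n + 2)) z) unitDisk := fun z hz => by
    simp only [tailSeries, (hrep z hz).tsum_eq, add_sub_cancel]
  have h0 : (0 : ℂ) ∈ unitDisk := Metric.mem_ball_self one_pos
  refine ⟨⟨hf, by simpa [tailSeries] using hfc h0, ?_⟩, injOn_of_eqOn_add_tailSeries hs hfc ?_,
    fun z hz hz0 => ?_⟩
  · simpa using (hasDerivAt_of_eqOn_add_tailSeries hs hfc h0).deriv
  · exact tsum_add_two_mul_le_one_of_tsum_succ_mul_le (fun n => norm_nonneg _) hs hK.le hcoef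
      (mul_le_one₀ (by linarith) hcos.le (cos_le_one ξ))
  · obtain ⟨hfz, hlt⟩ := norm_mul_deriv_div_sub_one_lt hs hfc hK hcoef hz hz0
    have hre := cos_sub_norm_sub_one_le_re_exp_mul ξ (z * deriv f z / f z)
    exact ⟨hfz, by rw [mul_div_assoc]; linarith⟩
end
end

section
/- Let τ ∈ ℂ \ {0}, 0 < ϑ ≤ 1 and δ < 1. If f(z) = z + Σ_{n=2}^∞ a_n z^n belongs to the class ℛ^τ(ϑ, δ), then for every integer n ≥ 2 one has |a_n| ≤ 2|τ|(1-δ) / (1 + ϑ(n-1)). -/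
noncomputable section

open Complex Real Set

/-!
Write `H(z) = (1 - ϑ) f(z)/z + ϑ f'(z) - 1 = ∑_{n ≥ 2} (1 + ϑ(n - 1)) aₙ z^(n-1)` and
`c = 2τ(1 - δ)`. The condition `|H| < |c + H|` says that `p = c̄ (c + 2H)` has positive real part,
and `p(0) = |c|²`. Carathéodory's bound `|pₖ| ≤ 2 Re p(0)` (integrate `Re p(r e^{iθ}) e^{-ikθ}`
over `θ`, use `Re p ≥ 0`, let `r → 1`) gives `2|c| (1 + ϑ(n - 1)) |aₙ| ≤ 2|c|²`.
-/

open Metric MeasureTheory Filter Topology ComplexConjugate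

section PowerSeries

variable {β : ℕ → ℂ} {e : ℕ → ℕ} {R : ℝ} {z : ℂ}

theorem exists_ball_summable_majorant (hβ : ∀ z ∈ ball (0 : ℂ) R, Summable fun k => β k * z ^ e k)
    (hz : z ∈ ball (0 : ℂ) R) :
    ∃ ρ, z ∈ ball (0 : ℂ) ρ ∧ Summable (fun k => ‖β k‖ * ρ ^ e k) ∧
      ∀ k, ∀ w ∈ ball (0 : ℂ) ρ, ‖β k * w ^ e k‖ ≤ ‖β k‖ * ρ ^ e k := by
  rw [mem_ball_zero_iff] at hz
  obtain ⟨ρ, hzρ, hρR⟩ := exists_between hz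
  have hρ : 0 ≤ ρ := (norm_nonneg z).trans hzρ.le
  refine ⟨ρ, mem_ball_zero_iff.2 hzρ, ?_, fun k w hw => ?_⟩
  · have h := (summable_norm_iff.2 (hβ ρ (by simpa [abs_of_nonneg hρ] using hρR)))
    simpa [norm_pow, abs_of_nonneg hρ] using h
  · rw [norm_mul, norm_pow]
    gcongr
    exact (mem_ball_zero_iff.1 hw).le

theorem differentiableAt_tsum_mul_pow
    (hβ : ∀ z ∈ ball (0 : ℂ) R, Summable fun k => β k * z ^ e k) (hz : z ∈ ball (0 : ℂ) R) :
    DifferentiableAt ℂ (fun w => ∑' k, β k * w ^ e k) z := by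
  obtain ⟨ρ, hzρ, hsum, hbound⟩ := exists_ball_summable_majorant hβ hz
  exact (differentiableOn_tsum_of_summable_norm hsum (fun k => by fun_prop) isOpen_ball
    hbound).differentiableAt (isOpen_ball.mem_nhds hzρ)

theorem hasSum_deriv_tsum_mul_pow
    (hβ : ∀ z ∈ ball (0 : ℂ) R, Summable fun k => β k * z ^ e k) (hz : z ∈ ball (0 : ℂ) R) :
    HasSum (fun k => e k * β k * z ^ (e k - 1)) (deriv (fun w => ∑' k, β k * w ^ e k) z) := by
  obtain ⟨ρ, hzρ, hsum, hbound⟩ := exists_ball_summable_majorant hβ hz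
  refine (hasSum_deriv_of_summable_norm hsum (fun k => by fun_prop) isOpen_ball hbound
    hzρ).congr_fun fun k => ?_
  simp only [deriv_const_mul_field', deriv_pow_field]
  ring

end PowerSeries

section Fourier

theorem integral_exp_int_mul_I (m : ℤ) :
    ∫ θ in Ioc 0 (2 * π), exp (m * θ * I) = if m = 0 then (2 * π : ℂ) else 0 := by
  rw [← intervalIntegral.integral_of_le (by positivity)]
  split_ifs with hm
  · simp [hm]
  · have hmI : (m : ℂ) * I ≠ 0 := mul_ne_zero (by exact_mod_cast hm) I_ne_zero
    simp_rw [mul_right_comm _ _ I]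
    rw [integral_exp_mul_complex hmI]
    have : (m : ℂ) * I * ((2 * π : ℝ) : ℂ) = m * (2 * π * I) := by push_cast; ring
    rw [this, exp_int_mul_two_pi_mul_I]
    simp

variable {γ : ℕ → ℂ}

theorem continuous_tsum_mul_exp (hγ : Summable (‖γ ·‖)) :
    Continuous fun θ : ℝ => ∑' k, γ k * exp ((k + 1) * θ * I) :=
  continuous_tsum (fun k => by fun_prop) hγ fun k θ => by simp [Complex.norm_exp]

theorem hasSum_integral_tsum_mul_exp (hγ : Summable (‖γ ·‖)) (m : ℤ) :
    HasSum (fun k => γ k * ∫ θ in Ioc 0 (2 * π), exp ((k + 1 + m : ℤ) * θ * I))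
      (∫ θ in Ioc 0 (2 * π), (∑' k, γ k * exp ((k + 1) * θ * I)) * exp (m * θ * I)) := by
  have hterm : ∀ (k : ℕ) (θ : ℝ), γ k * exp ((k + 1) * θ * I) * exp (m * θ * I) =
      γ k * exp ((k + 1 + m : ℤ) * θ * I) := by
    intro k θ
    rw [mul_assoc, ← Complex.exp_add]
    push_cast
    ring_nf
  have hint : ∀ k : ℕ, Integrable (fun θ : ℝ => γ k * exp ((k + 1 + m : ℤ) * θ * I))
      (volume.restrict (Ioc 0 (2 * π))) :=
    fun k => Continuous.integrableOn_Ioc (by fun_prop)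
  have hnorm : ∀ k : ℕ, ∫ θ in Ioc 0 (2 * π), ‖γ k * exp ((k + 1 + m : ℤ) * θ * I)‖ =
      2 * π * ‖γ k‖ := by
    intro k
    simp [Complex.norm_exp, Real.volume_real_Ioc, Real.pi_pos.le]
  have h := hasSum_integral_of_summable_integral_norm hint
    (by simpa only [hnorm] using hγ.mul_left (2 * π))
  simp only [integral_const_mul] at h
  have hfun : (fun θ : ℝ => (∑' k, γ k * exp ((k + 1) * θ * I)) * exp (m * θ * I)) =
      fun θ : ℝ => ∑' k, γ k * exp ((k + 1 + m : ℤ) * θ * I) :=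
    funext fun θ => by rw [← tsum_mul_right]; exact tsum_congr fun k => hterm k θ
  rwa [hfun]

theorem integral_add_tsum_mul_exp_mul_exp {w : ℂ} (hγ : Summable (‖γ ·‖)) (m : ℤ) :
    ∫ θ in Ioc 0 (2 * π), (w + ∑' k, γ k * exp ((k + 1) * θ * I)) * exp (m * θ * I) =
      w * (if m = 0 then (2 * π : ℂ) else 0) +
        ∑' k, γ k * (if (k + 1 + m : ℤ) = 0 then (2 * π : ℂ) else 0) := by
  have hcont := continuous_tsum_mul_exp hγ
  simp only [add_mul w]
  rw [integral_add (Continuous.integrableOn_Ioc (by fun_prop))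
    (Continuous.integrableOn_Ioc (by fun_prop)), integral_const_mul, integral_exp_int_mul_I,
    ← (hasSum_integral_tsum_mul_exp hγ m).tsum_eq]
  simp only [integral_exp_int_mul_I]

theorem norm_le_two_mul_re_of_re_add_tsum_mul_exp_nonneg {w : ℂ} (hγ : Summable (‖γ ·‖))
    (hre : ∀ θ : ℝ, 0 ≤ (w + ∑' k, γ k * exp ((k + 1) * θ * I)).re) (n : ℕ) :
    ‖γ n‖ ≤ 2 * w.re := by
  set u : ℝ → ℂ := fun θ => w + ∑' k, γ k * exp ((k + 1) * θ * I)
  replace hre : ∀ θ, 0 ≤ (u θ).re := hre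
  have hu : Continuous u := continuous_const.add (continuous_tsum_mul_exp hγ)
  have hcoef : ∫ θ in Ioc 0 (2 * π), u θ * exp ((-(n + 1) : ℤ) * θ * I) = 2 * π * γ n := by
    rw [integral_add_tsum_mul_exp_mul_exp hγ, if_neg (by omega), mul_zero, zero_add,
      tsum_eq_single n fun k hk => by rw [if_neg (by omega), mul_zero], if_pos (by omega),
      mul_comm]
  have hvanish : ∫ θ in Ioc 0 (2 * π), u θ * exp ((n + 1 : ℤ) * θ * I) = 0 := by
    rw [integral_add_tsum_mul_exp_mul_exp hγ, if_neg (by omega), mul_zero, zero_add]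
    exact (tsum_congr fun k => by rw [if_neg (by omega), mul_zero]).trans tsum_zero
  have hmean : ∫ θ in Ioc 0 (2 * π), u θ = 2 * π * w := by
    have h := integral_add_tsum_mul_exp_mul_exp (w := w) hγ 0
    simp only [Int.cast_zero, zero_mul, Complex.exp_zero, mul_one, if_true] at h
    rw [h, (tsum_congr fun k => by rw [if_neg (by omega), mul_zero]).trans tsum_zero, add_zero,
      mul_comm]
  have hre_coef : ∫ θ in Ioc 0 (2 * π), ((u θ).re : ℂ) * exp ((-(n + 1) : ℤ) * θ * I) =
      π * γ n := by
    have hsplit : ∀ θ : ℝ, ((u θ).re : ℂ) * exp ((-(n + 1) : ℤ) * θ * I) =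
        (u θ * exp ((-(n + 1) : ℤ) * θ * I) + conj (u θ * exp ((n + 1 : ℤ) * θ * I))) / 2 := by
      intro θ
      rw [re_eq_add_conj, map_mul, ← Complex.exp_conj]
      simp only [map_mul, conj_ofReal, conj_I, map_intCast]
      push_cast
      ring_nf
    simp only [hsplit]
    rw [integral_div, integral_add (Continuous.integrableOn_Ioc (by fun_prop))
      (Continuous.integrableOn_Ioc (by fun_prop)), integral_conj, hcoef, hvanish]
    simp only [map_zero, add_zero]
    ring
  have hre_mean : ∫ θ in Ioc 0 (2 * π), (u θ).re = 2 * π * w.re := by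
    have hint : IntegrableOn u (Ioc 0 (2 * π)) := hu.integrableOn_Ioc
    have h := integral_re hint
    simp only [RCLike.re_to_complex] at h
    rw [h, hmean]
    simp
  have hπ : 0 < π := pi_pos
  have key : π * ‖γ n‖ ≤ π * (2 * w.re) := calc
    π * ‖γ n‖ = ‖∫ θ in Ioc 0 (2 * π), ((u θ).re : ℂ) * exp ((-(n + 1) : ℤ) * θ * I)‖ := by
      rw [hre_coef, norm_mul, norm_real, Real.norm_of_nonneg hπ.le]
    _ ≤ ∫ θ in Ioc 0 (2 * π), ‖((u θ).re : ℂ) * exp ((-(n + 1) : ℤ) * θ * I)‖ :=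
      norm_integral_le_integral_norm _
    _ = ∫ θ in Ioc 0 (2 * π), (u θ).re := by
      refine integral_congr_ae (Filter.Eventually.of_forall fun θ => ?_)
      simpa [Complex.norm_exp] using hre θ
    _ = π * (2 * w.re) := by rw [hre_mean]; ring
  exact le_of_mul_le_mul_left key hπ

end Fourier

theorem norm_le_two_mul_re_of_re_add_tsum_mul_pow_nonneg {w : ℂ} {β : ℕ → ℂ}
    (hβ : ∀ z ∈ ball (0 : ℂ) 1, Summable fun k => β k * z ^ (k + 1))
    (hre : ∀ z ∈ ball (0 : ℂ) 1, 0 ≤ (w + ∑' k, β k * z ^ (k + 1)).re) (n : ℕ) :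
    ‖β n‖ ≤ 2 * w.re := by
  have hr : ∀ r ∈ Ioo (0 : ℝ) 1, ‖β n‖ * r ^ (n + 1) ≤ 2 * w.re := by
    rintro r ⟨hr0, hr1⟩
    have hγ : Summable fun k => ‖β k * (r : ℂ) ^ (k + 1)‖ :=
      summable_norm_iff.2 (hβ r (by simpa [abs_of_pos hr0] using hr1))
    have h := norm_le_two_mul_re_of_re_add_tsum_mul_exp_nonneg hγ (w := w) (fun θ => ?_) n
    · simpa [abs_of_pos hr0] using h
    have hz : (r * exp (θ * I) : ℂ) ∈ ball (0 : ℂ) 1 := by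
      simpa [Complex.norm_exp, abs_of_pos hr0] using hr1
    convert hre _ hz using 4
    funext k
    rw [mul_pow, ← Complex.exp_nat_mul]
    push_cast
    ring_nf
  have hlim : Tendsto (fun r : ℝ => ‖β n‖ * r ^ (n + 1)) (𝓝[<] 1) (𝓝 ‖β n‖) := by
    have hc : Continuous fun r : ℝ => ‖β n‖ * r ^ (n + 1) := by fun_prop
    exact (hc.tendsto' 1 _ (by simp)).mono_left nhdsWithin_le_nhds
  exact le_of_tendsto hlim (eventually_of_mem (Ioo_mem_nhdsLT zero_lt_one) hr)

theorem AnalyticOnNhd.ne_zero_of_norm_sub_lt_norm {g : ℂ → ℂ} {U : Set ℂ} {c : ℂ}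
    (hg : AnalyticOnNhd ℂ g U) (hUo : IsOpen U) (hU : IsPreconnected U) {z₀ : ℂ} (hz₀ : z₀ ∈ U)
    (hgz₀ : g z₀ ≠ 0) (hc : c ≠ 0) (hlt : ∀ z ∈ U, g z ≠ 0 → ‖g z - c‖ < ‖g z‖) {z : ℂ}
    (hz : z ∈ U) : g z ≠ 0 := by
  intro hgz
  rcases (hg z hz).eventually_eq_zero_or_eventually_ne_zero with hzero | hne
  · exact hgz₀ (hg.eqOn_zero_of_preconnected_of_eventuallyEq_zero hU hz hzero hz₀)
  have hcont : ContinuousAt (fun w => ‖g w‖ - ‖g w - c‖) z := by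
    have := (hg z hz).continuousAt
    fun_prop
  have hle : 0 ≤ ‖g z‖ - ‖g z - c‖ := by
    refine ge_of_tendsto (hcont.tendsto.mono_left (nhdsWithin_le_nhds (s := {z}ᶜ))) ?_
    filter_upwards [hne, eventually_nhdsWithin_of_eventually_nhds (hUo.mem_nhds hz)]
      with w hw hwU
    exact (sub_pos.2 (hlt w hwU hw)).le
  rw [hgz, zero_sub, norm_neg, norm_zero, zero_sub, neg_nonneg] at hle
  exact hc (norm_le_zero_iff.1 hle)

theorem Complex.re_conj_mul_add_two_mul (c h : ℂ) :
    (conj c * (c + 2 * h)).re = ‖c + h‖ ^ 2 - ‖h‖ ^ 2 := by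
  simp only [Complex.sq_norm, normSq_apply, mul_re, mul_im, add_re, add_im, conj_re, conj_im]
  norm_num
  ring

def mixedQuotient (ϑ : ℝ) (f : ℂ → ℂ) (z : ℂ) : ℂ :=
  (1 - ϑ) * (if z = 0 then 1 else f z / z) + ϑ * deriv f z

theorem hasSum_mixedQuotient_sub_one {ϑ : ℝ} {f : ℂ → ℂ} {a : ℕ → ℂ}
    (hrep : ∀ z ∈ ball (0 : ℂ) 1, HasSum (fun k => a (k + 2) * z ^ (k + 2)) (f z - z)) {z : ℂ}
    (hz : z ∈ ball (0 : ℂ) 1) :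
    HasSum (fun k => (1 + ϑ * (k + 1)) * a (k + 2) * z ^ (k + 1)) (mixedQuotient ϑ f z - 1) := by
  set T : ℂ → ℂ := fun w => ∑' k, a (k + 2) * w ^ (k + 2)
  have hT : ∀ w ∈ ball (0 : ℂ) 1, Summable fun k => a (k + 2) * w ^ (k + 2) :=
    fun w hw => (hrep w hw).summable
  have hquot : HasSum (fun k => a (k + 2) * z ^ (k + 1)) ((if z = 0 then 1 else f z / z) - 1) := by
    by_cases hz0 : z = 0
    · simp [hz0]
    · rw [if_neg hz0, ← div_self hz0, ← sub_div]
      refine ((hrep z hz).div_const z).congr_fun fun k => ?_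
      field_simp
      ring
  have hderiv : HasSum (fun k => (k + 2) * a (k + 2) * z ^ (k + 1)) (deriv f z - 1) := by
    have hfT : f =ᶠ[𝓝 z] fun w => w + T w :=
      eventually_of_mem (isOpen_ball.mem_nhds hz) fun w hw => by
        simp only [T, (hrep w hw).tsum_eq]
        ring
    rw [hfT.deriv_eq,
      ((hasDerivAt_id' z).fun_add (differentiableAt_tsum_mul_pow hT hz).hasDerivAt).deriv,
      add_sub_cancel_left]
    simpa using hasSum_deriv_tsum_mul_pow (e := fun k => k + 2) hT hz
  have hval : mixedQuotient ϑ f z - 1 =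
      (1 - ϑ) * ((if z = 0 then 1 else f z / z) - 1) + ϑ * (deriv f z - 1) := by
    simp only [mixedQuotient]
    ring
  rw [hval]
  exact ((hquot.mul_left _).add (hderiv.mul_left _)).congr_fun fun k => by ring

theorem ClassR.norm_mixedQuotient_sub_one_div_lt_one {τ : ℂ} {ϑ δ : ℝ} {f : ℂ → ℂ}
    (hf : ClassR τ ϑ δ f) {z : ℂ} (hz : z ∈ unitDisk) :
    ‖(mixedQuotient ϑ f z - 1) / (2 * τ * (1 - δ) + (mixedQuotient ϑ f z - 1))‖ < 1 := by
  simpa only [mixedQuotient, add_sub_assoc, add_assoc] using hf.2.2 z hz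

theorem norm_le_norm_of_norm_tsum_div_add_tsum_lt_one {b : ℕ → ℂ} {c : ℂ} (hc : c ≠ 0)
    (hb : ∀ z ∈ ball (0 : ℂ) 1, Summable fun k => b k * z ^ (k + 1))
    (hlt : ∀ z ∈ ball (0 : ℂ) 1,
      ‖(∑' k, b k * z ^ (k + 1)) / (c + ∑' k, b k * z ^ (k + 1))‖ < 1) (n : ℕ) :
    ‖b n‖ ≤ ‖c‖ := by
  set H : ℂ → ℂ := fun z => ∑' k, b k * z ^ (k + 1)
  replace hlt : ∀ z ∈ ball (0 : ℂ) 1, ‖H z / (c + H z)‖ < 1 := hlt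
  -- Where `c + H z = 0` the quotient is the junk value `0`; such zeros are excluded by the
  -- identity theorem, since `c + H` does not vanish at `0`.
  have hne : ∀ z ∈ ball (0 : ℂ) 1, c + H z ≠ 0 := by
    have hdiff : DifferentiableOn ℂ (fun z => c + H z) (ball 0 1) := fun z hz =>
      ((differentiableAt_tsum_mul_pow hb hz).const_add c).differentiableWithinAt
    refine fun z hz => (hdiff.analyticOnNhd isOpen_ball).ne_zero_of_norm_sub_lt_norm isOpen_ball
      (convex_ball 0 1).isPreconnected (mem_ball_self one_pos) (by simpa [H] using hc) hc
      (fun w hw hw0 => ?_) hz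
    simpa [norm_div, div_lt_one (norm_pos_iff.2 hw0)] using hlt w hw
  have hre : ∀ z ∈ ball (0 : ℂ) 1,
      0 ≤ (conj c * c + ∑' k, 2 * conj c * b k * z ^ (k + 1)).re := fun z hz => by
    have h := hlt z hz
    rw [norm_div, div_lt_one (norm_pos_iff.2 (hne z hz))] at h
    have hsum : conj c * c + ∑' k, 2 * conj c * b k * z ^ (k + 1) = conj c * (c + 2 * H z) := by
      simp only [mul_assoc, tsum_mul_left, H]
      ring
    rw [hsum, re_conj_mul_add_two_mul]
    nlinarith [norm_nonneg (H z)]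
  have hsummable : ∀ z ∈ ball (0 : ℂ) 1, Summable fun k => 2 * conj c * b k * z ^ (k + 1) :=
    fun z hz => by simpa only [mul_assoc] using (hb z hz).mul_left (2 * conj c)
  have h := norm_le_two_mul_re_of_re_add_tsum_mul_pow_nonneg hsummable hre n
  rw [conj_mul', norm_mul, norm_mul, Complex.norm_conj, Complex.norm_two, ← ofReal_pow,
    ofReal_re] at h
  nlinarith [norm_pos_iff.2 hc]

theorem stmt4_general (τ : ℂ) (hτ : τ ≠ 0) (ϑ δ : ℝ) (hϑ0 : 0 < ϑ) (hδ : δ < 1)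
    (f : ℂ → ℂ) (a : ℕ → ℂ)
    (hrep : ∀ z ∈ unitDisk, HasSum (fun n : ℕ => a (n + 2) * z ^ (n + 2)) (f z - z))
    (hf : ClassR τ ϑ δ f) :
    ∀ n : ℕ, 2 ≤ n →
      ‖a n‖ ≤ 2 * ‖τ‖ * (1 - δ) / (1 + ϑ * ((n : ℝ) - 1)) := by
  intro n hn
  obtain ⟨m, rfl⟩ := Nat.exists_eq_add_of_le' hn
  have hc : 2 * τ * (1 - δ) ≠ 0 :=
    mul_ne_zero (mul_ne_zero two_ne_zero hτ) (sub_ne_zero.2 (by exact_mod_cast hδ.ne'))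
  have hnorm_c : ‖2 * τ * (1 - δ)‖ = 2 * ‖τ‖ * (1 - δ) := by
    rw [norm_mul, norm_mul, ← ofReal_one, ← ofReal_sub, norm_real,
      Real.norm_of_nonneg (by linarith), Complex.norm_two]
  have hb := norm_le_norm_of_norm_tsum_div_add_tsum_lt_one hc
    (fun z hz => (hasSum_mixedQuotient_sub_one (ϑ := ϑ) hrep hz).summable)
    (fun z hz => by
      rw [(hasSum_mixedQuotient_sub_one hrep hz).tsum_eq]
      exact hf.norm_mixedQuotient_sub_one_div_lt_one hz) m
  have hden : 0 < 1 + ϑ * (m + 1) := by positivity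
  rw [norm_mul, show (1 + ϑ * (m + 1) : ℂ) = ((1 + ϑ * (m + 1) : ℝ) : ℂ) by push_cast; ring,
    norm_real, Real.norm_of_nonneg hden.le, hnorm_c] at hb
  rw [le_div_iff₀ (by push_cast; linarith)]
  push_cast
  linarith

/-- coefficient bounds for functions in `ℛ^τ(ϑ, δ)`. -/
theorem stmt4 (τ : ℂ) (hτ : τ ≠ 0) (ϑ δ : ℝ) (hϑ0 : 0 < ϑ) (hϑ1 : ϑ ≤ 1) (hδ : δ < 1)
    (f : ℂ → ℂ) (a : ℕ → ℂ)
    (hrep : ∀ z ∈ unitDisk, HasSum (fun n : ℕ => a (n + 2) * z ^ (n + 2)) (f z - z))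
    (hf : ClassR τ ϑ δ f) :
    ∀ n : ℕ, 2 ≤ n →
      ‖a n‖ ≤ 2 * ‖τ‖ * (1 - δ) / (1 + ϑ * ((n : ℝ) - 1)) :=
  stmt4_general τ hτ ϑ δ hϑ0 hδ f a hrep hf
end
end

section
/- Let m ≥ 1 be an integer, 0 < q < 1, |ξ| < π/2 and 0 ≤ γ < 1. If [ sec ξ + (1-γ) ] · m(m+1) q² / (1-q)² + [ 2 sec ξ + 4(1-γ) ] · m q / (1-q) + 2(1-γ) · ( 1 - (1-q)^m ) ≤ 1 - γ, then the Pascal distribution series Θ_q^m belongs to the class 𝒦(ξ, γ). -/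
/-!
Write `Θ(z) = z + ∑ aₙ z^(n+2)` with `aₙ ≥ 0` and put `A = ∑ (n+2) aₙ`, `B = ∑ (n+2)(n+1) aₙ`,
so that `‖Θ' - 1‖ ≤ A` and `‖Θ''‖ ≤ B` on the disk. The hypothesis yields
`B + (1-γ) cos ξ · A ≤ (1-γ) cos ξ`, hence `A < 1`: then `Θ - id` is a contraction, so `Θ` is
univalent with `Θ' ≠ 0`, and `‖z Θ''/Θ'‖ < B / (1 - A) ≤ (1-γ) cos ξ` keeps
`e^{iξ} (1 + z Θ''/Θ')` in the half-plane `Re > γ cos ξ`. The sums `A` and `B` are moments of the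
Pascal (negative binomial) distribution, computed from `∑ C(n+k, k) rⁿ = (1-r)^-(k+1)`.
-/

noncomputable section

open Complex Real Set

section PowerSeries

variable {a : ℕ → ℂ} {z : ℂ}

lemma norm_tsum_mul_pow_le {u : ℕ → ℝ} (hu : Summable u) (hau : ∀ n, ‖a n‖ ≤ u n) (d : ℕ → ℕ)
    (hz : ‖z‖ ≤ 1) : ‖∑' n, a n * z ^ d n‖ ≤ ∑' n, u n :=
  tsum_of_norm_bounded hu.hasSum fun n => by
    rw [norm_mul, norm_pow]
    exact (mul_le_of_le_one_right (norm_nonneg _) (pow_le_one₀ (norm_nonneg _) hz)).trans (hau n)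

lemma hasDerivAt_tsum_mul_pow_add_one (k : ℕ)
    (ha : Summable fun n => ((n + k + 1 : ℕ) : ℝ) * ‖a n‖) (hz : ‖z‖ < 1) :
    HasDerivAt (fun w => ∑' n, a n * w ^ (n + k + 1))
      (∑' n, ((n + k + 1 : ℕ) : ℂ) * a n * z ^ (n + k)) z := by
  refine hasDerivAt_tsum_of_isPreconnected (g := fun n w => a n * w ^ (n + k + 1))
    (g' := fun n w => ((n + k + 1 : ℕ) : ℂ) * a n * w ^ (n + k)) ha Metric.isOpen_ball
    (convex_ball (0 : ℂ) 1).isPreconnected (fun n y _ => ?_) (fun n y hy => ?_)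
    (Metric.mem_ball_self one_pos) ?_ (mem_ball_zero_iff.2 hz)
  · exact ((hasDerivAt_pow (n + k + 1) y).const_mul (a n)).congr_deriv (by
      rw [Nat.add_sub_cancel]; ring)
  · rw [norm_mul, norm_mul, Complex.norm_natCast, norm_pow]
    exact mul_le_of_le_one_right (by positivity)
      (pow_le_one₀ (norm_nonneg _) (mem_ball_zero_iff.1 hy).le)
  · simp

lemma hasDerivAt_add_tsum_mul_pow_add_two (ha : Summable fun n : ℕ => ((n : ℝ) + 2) * ‖a n‖)
    (hz : ‖z‖ < 1) :
    HasDerivAt (fun w => w + ∑' n, a n * w ^ (n + 2))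
      (1 + ∑' n : ℕ, ((n : ℂ) + 2) * a n * z ^ (n + 1)) z := by
  have hsum : Summable fun n => ((n + 1 + 1 : ℕ) : ℝ) * ‖a n‖ :=
    ha.congr fun n => by push_cast; ring
  refine ((hasDerivAt_id' z).add (hasDerivAt_tsum_mul_pow_add_one 1 hsum hz)).congr_deriv ?_
  congr 1
  exact tsum_congr fun n => by push_cast; ring

lemma hasDerivAt_one_add_tsum_mul_pow_add_one
    (ha : Summable fun n : ℕ => ((n : ℝ) + 2) * (n + 1) * ‖a n‖) (hz : ‖z‖ < 1) :
    HasDerivAt (fun w => 1 + ∑' n : ℕ, ((n : ℂ) + 2) * a n * w ^ (n + 1))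
      (∑' n : ℕ, ((n : ℂ) + 2) * (n + 1) * a n * z ^ n) z := by
  have hsum : Summable fun n => ((n + 0 + 1 : ℕ) : ℝ) * ‖((n : ℂ) + 2) * a n‖ :=
    ha.congr fun n => by
      rw [norm_mul, show ‖(n : ℂ) + 2‖ = n + 2 by norm_cast]
      push_cast
      ring
  refine ((hasDerivAt_tsum_mul_pow_add_one 0 hsum hz).const_add 1).congr_deriv ?_
  exact tsum_congr fun n => by push_cast; ring

end PowerSeries

lemma injOn_of_norm_deriv_sub_one_le {𝕜 : Type*} [RCLike 𝕜] {f : 𝕜 → 𝕜} {s : Set 𝕜} {A : ℝ}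
    (hs : Convex ℝ s) (hf : ∀ z ∈ s, DifferentiableAt 𝕜 f z)
    (hA : ∀ z ∈ s, ‖deriv f z - 1‖ ≤ A) (hA1 : A < 1) : InjOn f s := by
  intro x hx y hy hxy
  have hlip := hs.norm_image_sub_le_of_norm_deriv_le (f := fun z => f z - z)
    (fun z hz => (hf z hz).sub differentiableAt_id)
    (fun z hz => by rw [((hf z hz).hasDerivAt.fun_sub (hasDerivAt_id' z)).deriv]; exact hA z hz)
    hx hy
  have hle : ‖y - x‖ ≤ A * ‖y - x‖ := by simpa [hxy, norm_sub_rev] using hlip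
  by_contra hne
  have hpos : 0 < ‖y - x‖ := norm_pos_iff.2 (sub_ne_zero.2 (Ne.symm hne))
  nlinarith

lemma mul_cos_lt_re_exp_mul_one_add {ξ γ : ℝ} {w : ℂ} (hw : ‖w‖ < (1 - γ) * Real.cos ξ) :
    γ * Real.cos ξ < (Complex.exp (Complex.I * ξ) * (1 + w)).re := by
  rw [mul_comm I]
  have hre : -‖w‖ ≤ (Complex.exp (ξ * I) * w).re := by
    have := Complex.abs_re_le_norm (Complex.exp (ξ * I) * w)
    rw [norm_mul, Complex.norm_exp_ofReal_mul_I, one_mul] at this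
    exact (abs_le.1 this).1
  rw [mul_one_add, Complex.add_re, Complex.exp_ofReal_mul_I_re]
  linarith

theorem spiralK0_of_norm_deriv_le {f : ℂ → ℂ} {ξ γ A B : ℝ} (hcos : 0 < Real.cos ξ) (hγ : γ < 1)
    (hf : DifferentiableOn ℂ f unitDisk) (hf0 : f 0 = 0) (hf'0 : deriv f 0 = 1)
    (hA : ∀ z ∈ unitDisk, ‖deriv f z - 1‖ ≤ A) (hA1 : A < 1)
    (hB : ∀ z ∈ unitDisk, ‖deriv (deriv f) z‖ ≤ B)
    (hAB : B + (1 - γ) * Real.cos ξ * A ≤ (1 - γ) * Real.cos ξ) :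
    SpiralK0 ξ γ f := by
  have hdisk : IsOpen unitDisk := Metric.isOpen_ball
  have hdiff : ∀ z ∈ unitDisk, DifferentiableAt ℂ f z :=
    fun z hz => hf.differentiableAt (hdisk.mem_nhds hz)
  refine ⟨⟨hf.analyticOn hdisk, hf0, hf'0⟩,
    injOn_of_norm_deriv_sub_one_le (convex_ball 0 1) hdiff hA hA1, fun z hz => ?_⟩
  set c := (1 - γ) * Real.cos ξ
  have hc : 0 < c := mul_pos (sub_pos.2 hγ) hcos
  have hf' : 1 - A ≤ ‖deriv f z‖ := by
    have := norm_sub_norm_le (1 : ℂ) (1 - deriv f z)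
    rw [norm_one, sub_sub_cancel, norm_sub_rev] at this
    linarith [hA z hz]
  have hf'pos : 0 < ‖deriv f z‖ := by linarith
  refine ⟨norm_pos_iff.1 hf'pos, mul_cos_lt_re_exp_mul_one_add ?_⟩
  rw [norm_div, norm_mul, div_lt_iff₀ hf'pos]
  calc ‖z‖ * ‖deriv (deriv f) z‖ ≤ ‖z‖ * (c * (1 - A)) := by
        gcongr
        linarith [hB z hz]
    _ < c * (1 - A) := mul_lt_of_lt_one_left (by nlinarith) (mem_ball_zero_iff.1 hz)
    _ ≤ c * ‖deriv f z‖ := by gcongr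

theorem spiralK0_of_tsum_le {a : ℕ → ℂ} {ξ γ : ℝ} (hcos : 0 < Real.cos ξ) (hγ : γ < 1)
    (ha : Summable fun n : ℕ => ((n : ℝ) + 2) * (n + 1) * ‖a n‖)
    (h : ∑' n : ℕ, ((n : ℝ) + 2) * (n + 1) * ‖a n‖
        + (1 - γ) * Real.cos ξ * ∑' n : ℕ, ((n : ℝ) + 2) * ‖a n‖ ≤ (1 - γ) * Real.cos ξ) :
    SpiralK0 ξ γ (fun z => z + ∑' n, a n * z ^ (n + 2)) := by
  have hle : ∀ n : ℕ, ((n : ℝ) + 2) * ‖a n‖ ≤ ((n : ℝ) + 2) * (n + 1) * ‖a n‖ := fun n => by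
    have h2 : (0 : ℝ) ≤ ((n : ℝ) + 2) * ‖a n‖ := by positivity
    nlinarith [mul_nonneg (n.cast_nonneg : (0 : ℝ) ≤ n) h2]
  have ha' : Summable fun n : ℕ => ((n : ℝ) + 2) * ‖a n‖ :=
    ha.of_nonneg_of_le (fun n => by positivity) hle
  have hderiv : ∀ z ∈ unitDisk,
      deriv (fun w => w + ∑' n, a n * w ^ (n + 2)) z
        = 1 + ∑' n : ℕ, ((n : ℂ) + 2) * a n * z ^ (n + 1) :=
    fun z hz => (hasDerivAt_add_tsum_mul_pow_add_two ha' (mem_ball_zero_iff.1 hz)).deriv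
  have hderiv2 : ∀ z ∈ unitDisk, deriv (deriv fun w => w + ∑' n, a n * w ^ (n + 2)) z
      = ∑' n : ℕ, ((n : ℂ) + 2) * (n + 1) * a n * z ^ n := fun z hz => by
    rw [(Filter.eventuallyEq_of_mem (Metric.isOpen_ball.mem_nhds hz) hderiv).deriv_eq]
    exact (hasDerivAt_one_add_tsum_mul_pow_add_one ha (mem_ball_zero_iff.1 hz)).deriv
  have hA1 : ∑' n : ℕ, ((n : ℝ) + 2) * ‖a n‖ < 1 := by
    have hAB := ha'.tsum_le_tsum hle ha
    have hA0 : 0 ≤ ∑' n : ℕ, ((n : ℝ) + 2) * ‖a n‖ := tsum_nonneg fun n => by positivity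
    have hc : 0 < (1 - γ) * Real.cos ξ := mul_pos (sub_pos.2 hγ) hcos
    nlinarith
  refine spiralK0_of_norm_deriv_le hcos hγ (fun z hz =>
      (hasDerivAt_add_tsum_mul_pow_add_two ha' (mem_ball_zero_iff.1 hz)).differentiableAt
        |>.differentiableWithinAt)
    (by simp) (by rw [hderiv 0 (Metric.mem_ball_self one_pos)]; simp) (fun z hz => ?_) hA1
    (fun z hz => ?_) h
  · rw [hderiv z hz, add_sub_cancel_left]
    exact norm_tsum_mul_pow_le ha' (fun n => le_of_eq (by rw [norm_mul]; norm_cast)) _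
      (mem_ball_zero_iff.1 hz).le
  · rw [hderiv2 z hz]
    exact norm_tsum_mul_pow_le ha (fun n => le_of_eq (by rw [norm_mul, norm_mul]; norm_cast)) _
      (mem_ball_zero_iff.1 hz).le

lemma hasSum_choose_succ_mul_geometric {𝕜 : Type*} [NormedField 𝕜] [CompleteSpace 𝕜] (k : ℕ)
    {r : 𝕜} (hr : ‖r‖ < 1) :
    HasSum (fun n : ℕ => ((n + k).choose (k + 1) : 𝕜) * r ^ n) (r / (1 - r) ^ (k + 2)) := by
  refine (hasSum_nat_add_iff' 1).1 ?_
  have h := (hasSum_choose_mul_geometric_of_norm_lt_one (k + 1) hr).mul_left r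
  rw [mul_one_div] at h
  simpa [add_right_comm _ 1 k, add_assoc, pow_succ, mul_comm, mul_left_comm, mul_assoc] using h

lemma Nat.choose_add_mul (n k : ℕ) : (n + k).choose k * n = (n + k).choose (k + 1) * (k + 1) := by
  have := Nat.choose_succ_right_eq (n + k) k
  rwa [Nat.add_sub_cancel, eq_comm] at this

def pascalCoeff (m : ℕ) (q : ℝ) (n : ℕ) : ℝ :=
  (n + m).choose (m - 1) * q ^ (n + 1) * (1 - q) ^ m

lemma pascalTheta_eq (m : ℕ) (q : ℝ) :
    pascalTheta m q = fun z => z + ∑' n, (pascalCoeff m q n : ℂ) * z ^ (n + 2) := by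
  funext z
  simp only [pascalTheta, pascalCoeff]
  push_cast
  rfl

section PascalMoments

variable {m : ℕ} {q : ℝ}

lemma pascalCoeff_nonneg (hq0 : 0 ≤ q) (hq1 : q ≤ 1) (n : ℕ) : 0 ≤ pascalCoeff m q n := by
  have : 0 ≤ 1 - q := sub_nonneg.2 hq1
  unfold pascalCoeff
  positivity

lemma succ_mul_pascalCoeff_succ (k n : ℕ) (q : ℝ) :
    ((n : ℝ) + 1) * pascalCoeff (k + 1) q n
      = (k + 1) * q * (1 - q) ^ (k + 1) * ((n + (k + 1)).choose (k + 1) * q ^ n) := by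
  have hc : ((n + (k + 1)).choose k * (n + 1) : ℝ) = (n + (k + 1)).choose (k + 1) * (k + 1) := by
    rw [← add_assoc, add_right_comm]
    exact_mod_cast Nat.choose_add_mul (n + 1) k
  rw [pascalCoeff, Nat.add_sub_cancel]
  linear_combination q ^ (n + 1) * (1 - q) ^ (k + 1) * hc

lemma hasSum_pascalCoeff (hm : 1 ≤ m) (hq : |q| < 1) :
    HasSum (pascalCoeff m q) (1 - (1 - q) ^ m) := by
  obtain ⟨k, rfl⟩ : ∃ k, m = k + 1 := ⟨m - 1, by omega⟩
  have hq' : ‖q‖ < 1 := by rwa [Real.norm_eq_abs]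
  have hq1 : 1 - q ≠ 0 := by linarith [(abs_lt.1 hq).2]
  have h := ((hasSum_nat_add_iff' (f := fun n : ℕ => ((n + k).choose k : ℝ) * q ^ n) 1).2
    (hasSum_choose_mul_geometric_of_norm_lt_one k hq')).mul_left ((1 - q) ^ (k + 1))
  have e : (1 - q) ^ (k + 1) * (1 / (1 - q) ^ (k + 1) - 1) = 1 - (1 - q) ^ (k + 1) := by
    field_simp
  simp only [Finset.range_one, Finset.sum_singleton, zero_add, Nat.choose_self, pow_zero,
    Nat.cast_one, mul_one, e] at h
  convert! h using 2 with n
  rw [pascalCoeff, Nat.add_sub_cancel, ← add_assoc, add_right_comm n k 1]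
  ring

lemma hasSum_succ_mul_pascalCoeff (hm : 1 ≤ m) (hq : |q| < 1) :
    HasSum (fun n : ℕ => ((n : ℝ) + 1) * pascalCoeff m q n) (m * q / (1 - q)) := by
  obtain ⟨k, rfl⟩ : ∃ k, m = k + 1 := ⟨m - 1, by omega⟩
  have hq' : ‖q‖ < 1 := by rwa [Real.norm_eq_abs]
  have hq1 : 1 - q ≠ 0 := by linarith [(abs_lt.1 hq).2]
  have h := (hasSum_choose_mul_geometric_of_norm_lt_one (k + 1) hq').mul_left
    (((k : ℝ) + 1) * q * (1 - q) ^ (k + 1))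
  have e : ((k : ℝ) + 1) * q * (1 - q) ^ (k + 1) * (1 / (1 - q) ^ (k + 1 + 1))
      = ((k + 1 : ℕ) : ℝ) * q / (1 - q) := by
    field_simp
    push_cast
    ring
  rw [e] at h
  convert! h using 2 with n
  exact succ_mul_pascalCoeff_succ k n q

lemma hasSum_succ_mul_mul_pascalCoeff (hm : 1 ≤ m) (hq : |q| < 1) :
    HasSum (fun n : ℕ => ((n : ℝ) + 1) * n * pascalCoeff m q n)
      (m * (m + 1) * q ^ 2 / (1 - q) ^ 2) := by
  obtain ⟨k, rfl⟩ : ∃ k, m = k + 1 := ⟨m - 1, by omega⟩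
  have hq' : ‖q‖ < 1 := by rwa [Real.norm_eq_abs]
  have hq1 : 1 - q ≠ 0 := by linarith [(abs_lt.1 hq).2]
  have h := (hasSum_choose_succ_mul_geometric (k + 1) hq').mul_left
    (((k : ℝ) + 1) * (k + 2) * q * (1 - q) ^ (k + 1))
  have e : ((k : ℝ) + 1) * (k + 2) * q * (1 - q) ^ (k + 1) * (q / (1 - q) ^ (k + 1 + 2))
      = ((k + 1 : ℕ) : ℝ) * ((k + 1 : ℕ) + 1) * q ^ 2 / (1 - q) ^ 2 := by
    field_simp
    push_cast
    ring
  rw [e] at h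
  convert! h using 2 with n
  have hc : ((n + (k + 1)).choose (k + 1) * n : ℝ) = (n + (k + 1)).choose (k + 2) * (k + 2) := by
    exact_mod_cast Nat.choose_add_mul n (k + 1)
  rw [mul_right_comm, succ_mul_pascalCoeff_succ]
  linear_combination (k + 1) * q * (1 - q) ^ (k + 1) * q ^ n * hc

lemma hasSum_add_two_mul_pascalCoeff (hm : 1 ≤ m) (hq : |q| < 1) :
    HasSum (fun n : ℕ => ((n : ℝ) + 2) * pascalCoeff m q n)
      (m * q / (1 - q) + (1 - (1 - q) ^ m)) := by
  convert! (hasSum_succ_mul_pascalCoeff hm hq).add (hasSum_pascalCoeff hm hq) using 2 with n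
  ring

lemma hasSum_add_two_mul_add_one_mul_pascalCoeff (hm : 1 ≤ m) (hq : |q| < 1) :
    HasSum (fun n : ℕ => ((n : ℝ) + 2) * (n + 1) * pascalCoeff m q n)
      (m * (m + 1) * q ^ 2 / (1 - q) ^ 2 + 2 * (m * q / (1 - q))) := by
  convert! (hasSum_succ_mul_mul_pascalCoeff hm hq).add
    ((hasSum_succ_mul_pascalCoeff hm hq).mul_left 2) using 2 with n
  ring

end PascalMoments

lemma add_mul_le_of_inv_add_mul_le {s t M₀ M₁ M₂ : ℝ} (hs : 0 < s) (ht : 0 ≤ t)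
    (hM₀ : 0 ≤ M₀) (hM₁ : 0 ≤ M₁) (hM₂ : 0 ≤ M₂)
    (h : (s⁻¹ + t) * M₂ + (2 * s⁻¹ + 4 * t) * M₁ + 2 * t * M₀ ≤ t) :
    M₂ + 2 * M₁ + t * s * (M₁ + M₀) ≤ t * s := by
  have hscaled := mul_le_mul_of_nonneg_right h hs.le
  have hexpand : ((s⁻¹ + t) * M₂ + (2 * s⁻¹ + 4 * t) * M₁ + 2 * t * M₀) * s
      = M₂ + 2 * M₁ + t * s * (M₂ + 4 * M₁ + 2 * M₀) := by
    field_simp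
    ring
  rw [hexpand] at hscaled
  nlinarith [mul_nonneg ht hs.le]

theorem stmt12_general (m : ℕ) (hm : 1 ≤ m) (q : ℝ) (hq0 : 0 < q) (hq1 : q < 1)
    (ξ γ : ℝ) (hξ : |ξ| < π / 2) (hγ1 : γ < 1)
    (h : ((Real.cos ξ)⁻¹ + (1 - γ)) * ((m : ℝ) * ((m : ℝ) + 1) * q ^ 2 / (1 - q) ^ 2)
        + (2 * (Real.cos ξ)⁻¹ + 4 * (1 - γ)) * ((m : ℝ) * q / (1 - q))
        + 2 * (1 - γ) * (1 - (1 - q) ^ m) ≤ 1 - γ) :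
    SpiralK0 ξ γ (pascalTheta m q) := by
  have hq : |q| < 1 := abs_lt.2 ⟨by linarith, hq1⟩
  have hcos : 0 < Real.cos ξ := Real.cos_pos_of_mem_Ioo (abs_lt.1 hξ)
  have hnorm (n : ℕ) : ‖(pascalCoeff m q n : ℂ)‖ = pascalCoeff m q n := by
    rw [Complex.norm_real, Real.norm_of_nonneg (pascalCoeff_nonneg hq0.le hq1.le n)]
  have hA := hasSum_add_two_mul_pascalCoeff hm hq
  have hB := hasSum_add_two_mul_add_one_mul_pascalCoeff hm hq
  rw [pascalTheta_eq]
  refine spiralK0_of_tsum_le hcos hγ1 ?_ ?_ <;> simp only [hnorm]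
  · exact hB.summable
  rw [hA.tsum_eq, hB.tsum_eq]
  have hq1' : 0 < 1 - q := sub_pos.2 hq1
  exact add_mul_le_of_inv_add_mul_le hcos (sub_pos.2 hγ1).le
    (sub_nonneg.2 (pow_le_one₀ hq1'.le (by linarith)))
    (by positivity) (by positivity) h

/-- Corollary 2, `Θ_q^m ∈ 𝒦(ξ, γ)`. -/
theorem stmt12 (m : ℕ) (hm : 1 ≤ m) (q : ℝ) (hq0 : 0 < q) (hq1 : q < 1)
    (ξ γ : ℝ) (hξ : |ξ| < π / 2) (hγ0 : 0 ≤ γ) (hγ1 : γ < 1)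
    (h : ((Real.cos ξ)⁻¹ + (1 - γ)) * ((m : ℝ) * ((m : ℝ) + 1) * q ^ 2 / (1 - q) ^ 2)
        + (2 * (Real.cos ξ)⁻¹ + 4 * (1 - γ)) * ((m : ℝ) * q / (1 - q))
        + 2 * (1 - γ) * (1 - (1 - q) ^ m) ≤ 1 - γ) :
    SpiralK0 ξ γ (pascalTheta m q) :=
  stmt12_general m hm q hq0 hq1 ξ γ hξ hγ1 h
end
end

section
/- Let m ≥ 2 be an integer and 0 < q < 1. Then Σ_{n=2}^∞ (1/n) · C(n+m-2, m-1) q^{n-1} (1-q)^m = [ (1-q) - (1-q)^m - q(m-1)(1-q)^m ] / ( q(m-1) ). -/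
noncomputable section

open Complex Real Set

/-! Since `C(n+m-2, m-1) / n = C(n+m-2, m-2) / (m-1)`, the series is `(1-q)^m / ((m-1) q)` times
the negative binomial series `∑ C(n+m-2, m-2) q^n = (1-q)^(1-m)` with its first two terms
`1 + (m-1) q` removed. -/

theorem Nat.choose_succ_mul_succ_eq (n k : ℕ) :
    (n + k + 1).choose (k + 1) * (k + 1) = (n + k + 1).choose k * (n + 1) := by
  rw [Nat.choose_succ_right_eq, show n + k + 1 - k = n + 1 by omega]

section

variable {𝕜 : Type*} [NormedField 𝕜] {q : 𝕜}

theorem hasSum_choose_mul_geometric_tail (k : ℕ) (hq : ‖q‖ < 1) :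
    HasSum (fun n : ℕ ↦ ((n + 2 + k).choose k : 𝕜) * q ^ (n + 2))
      (1 / (1 - q) ^ (k + 1) - 1 - (k + 1) * q) := by
  have h : HasSum (fun n : ℕ ↦ ((n + 2 + k).choose k : 𝕜) * q ^ (n + 2))
      (1 / (1 - q) ^ (k + 1) - ∑ i ∈ Finset.range 2, ((i + k).choose k : 𝕜) * q ^ i) :=
    (hasSum_nat_add_iff' 2).mpr (hasSum_choose_mul_geometric_of_norm_lt_one k hq)
  have h01 : ∑ i ∈ Finset.range 2, ((i + k).choose k : 𝕜) * q ^ i = 1 + (k + 1) * q := by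
    simp [Finset.sum_range_succ, Nat.add_comm 1 k, Nat.choose_succ_self_right]
  rwa [h01, ← sub_sub] at h

variable [CharZero 𝕜]

theorem one_div_mul_choose_mul_geometric_eq (n k : ℕ) (hq : q ≠ 0) :
    1 / ((n : 𝕜) + 2) * ((n + (k + 2)).choose (k + 1) : 𝕜) * q ^ (n + 1) * (1 - q) ^ (k + 2) =
      (1 - q) ^ (k + 2) / ((k + 1) * q) * (((n + 2 + k).choose k : 𝕜) * q ^ (n + 2)) := by
  have h : (n + (k + 2)).choose (k + 1) * (k + 1) = (n + 2 + k).choose k * (n + 2) := by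
    rw [show n + (k + 2) = n + 1 + k + 1 by omega, show n + 2 + k = n + 1 + k + 1 by omega]
    exact Nat.choose_succ_mul_succ_eq (n + 1) k
  have hR : ((n + (k + 2)).choose (k + 1) : 𝕜) * ((k : 𝕜) + 1) =
      ((n + 2 + k).choose k : 𝕜) * ((n : 𝕜) + 2) := by exact_mod_cast h
  have hn : (n : 𝕜) + 2 ≠ 0 := by exact_mod_cast (n + 1).succ_ne_zero
  have hk : (k : 𝕜) + 1 ≠ 0 := by exact_mod_cast k.succ_ne_zero
  field_simp
  linear_combination q ^ (n + 2) * (1 - q) ^ (k + 2) * hR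

theorem hasSum_one_div_mul_choose_mul_geometric (k : ℕ) (hq0 : q ≠ 0) (hq1 : ‖q‖ < 1) :
    HasSum (fun n : ℕ ↦
        1 / ((n : 𝕜) + 2) * ((n + (k + 2)).choose (k + 1) : 𝕜) * q ^ (n + 1) * (1 - q) ^ (k + 2))
      (((1 - q) - (1 - q) ^ (k + 2) - q * (k + 1) * (1 - q) ^ (k + 2)) / (q * (k + 1))) := by
  have h1q : 1 - q ≠ 0 := sub_ne_zero.mpr fun h ↦ by simp [← h] at hq1
  have hk : (k : 𝕜) + 1 ≠ 0 := by exact_mod_cast k.succ_ne_zero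
  simp_rw [one_div_mul_choose_mul_geometric_eq _ k hq0]
  have h := (hasSum_choose_mul_geometric_tail k hq1).mul_left ((1 - q) ^ (k + 2) / ((k + 1) * q))
  have e : ((1 - q) - (1 - q) ^ (k + 2) - q * (k + 1) * (1 - q) ^ (k + 2)) / (q * (k + 1)) =
      (1 - q) ^ (k + 2) / ((k + 1) * q) * (1 / (1 - q) ^ (k + 1) - 1 - (k + 1) * q) := by
    rw [pow_succ _ (k + 1)]
    field_simp
  rwa [← e] at h

end

/-- closed form of the coefficient sum arising from `𝒢_q^m`. -/
theorem stmt19 (m : ℕ) (hm : 2 ≤ m) (q : ℝ) (hq0 : 0 < q) (hq1 : q < 1) :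
    ∑' n : ℕ,
      (1 / ((n : ℝ) + 2)) * ((n + m).choose (m - 1) : ℝ) * q ^ (n + 1) * (1 - q) ^ m
      = ((1 - q) - (1 - q) ^ m - q * ((m : ℝ) - 1) * (1 - q) ^ m) / (q * ((m : ℝ) - 1)) := by
  obtain ⟨k, rfl⟩ : ∃ k, m = k + 2 := ⟨m - 2, by omega⟩
  have hq : ‖q‖ < 1 := by rw [Real.norm_eq_abs, abs_lt]; exact ⟨by linarith, hq1⟩
  push_cast
  rw [show (k : ℝ) + 2 - 1 = k + 1 by ring]
  exact (hasSum_one_div_mul_choose_mul_geometric k hq0.ne' hq).tsum_eq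
end
end
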